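/- arXiv:0912.0487 — 2 statements merged into one kernel-verified Lean document; each statement's English description precedes it below -/
import Mathlib

section
/- Let d ≥ 2, M ≥ 1 and N ∈ ℕ, and set A_N = { t ∈ [0, e^{-N/d}]^d : ht(T^N(x_t)) < 16M }. Then the d-dimensional Lebesgue measure of A_N satisfies m_{ℝ^d}(A_N) ≥ (15^d/16^d − 1/4^d)·e^{-N}. -/
open MeasureTheory Filter Topology Matrix ENNReal

noncomputable section

/-- `G = SL_{d+1}(ℝ)`. -/
abbrev SLR (d : ℕ) : Type := Matrix.SpecialLinearGroup (Fin (d+1)) ℝ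

instance (d : ℕ) : TopologicalSpace (SLR d) :=
  TopologicalSpace.induced (fun g => (g : Matrix (Fin (d+1)) (Fin (d+1)) ℝ)) inferInstance

/-- `Γ = SL_{d+1}(ℤ)`, viewed as a subgroup of `G`. -/
def Gamma (d : ℕ) : Subgroup (SLR d) :=
  (Matrix.SpecialLinearGroup.map (n := Fin (d+1)) (Int.castRingHom ℝ)).range

/-- `X = Γ\G`, the space of right cosets `Γg`. -/
abbrev Xspace (d : ℕ) : Type := Quotient (QuotientGroup.rightRel (Gamma d))

instance (d : ℕ) : MeasurableSpace (Xspace d) := borel _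

/-- The projection `g ↦ Γg`. -/
def mkX (d : ℕ) (g : SLR d) : Xspace d := Quotient.mk (QuotientGroup.rightRel (Gamma d)) g

/-- Right translation `Γg ↦ Γ(gh)` on `X`. -/
def rTrans (d : ℕ) (h : SLR d) : Xspace d → Xspace d :=
  Quotient.map' (· * h) (fun x y hxy => by
    rw [QuotientGroup.rightRel_apply] at hxy ⊢
    simpa [mul_assoc] using hxy)

/-- The diagonal matrix `diag(e^{1/d}, ..., e^{1/d}, e^{-1})`. -/
def aMat (d : ℕ) : Matrix (Fin (d+1)) (Fin (d+1)) ℝ :=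
  Matrix.diagonal (fun i => if (i : ℕ) < d then Real.exp (1/d) else Real.exp (-1))

/-- The element `a = diag(e^{1/d}, ..., e^{1/d}, e^{-1}) ∈ SL_{d+1}(ℝ)` (for `d ≥ 1`). -/
def aElt (d : ℕ) (hd : 0 < d) : SLR d :=
  ⟨aMat d, by
    rw [aMat, Matrix.det_diagonal, Fin.prod_univ_castSucc]
    simp only [Fin.coe_castSucc, Fin.is_lt, if_true, Fin.val_last, lt_irrefl, if_false]
    rw [Finset.prod_const, Finset.card_univ, Fintype.card_fin, ← Real.exp_nat_mul,
      ← Real.exp_add]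
    rw [mul_one_div, div_self (Nat.cast_ne_zero.mpr hd.ne')]
    simp⟩

/-- The transformation `T(x) = xa` on `X`. -/
def Tmap (d : ℕ) (hd : 0 < d) : Xspace d → Xspace d := rTrans d (aElt d hd)

/-- The maximum norm of a vector in `ℝ^{d+1}`. -/
def vnorm (d : ℕ) (v : Fin (d+1) → ℝ) : ℝ := ⨆ i, |v i|

/-- The maximum norm on `(d+1) × (d+1)` matrices. -/
def mnorm (d : ℕ) (A : Matrix (Fin (d+1)) (Fin (d+1)) ℝ) : ℝ :=
  ⨆ p : Fin (d+1) × Fin (d+1), |A p.1 p.2|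

/-- The length of a shortest nonzero vector of the lattice `ℤ^{d+1} g`. -/
def shortestLen (d : ℕ) (g : SLR d) : ℝ :=
  ⨅ v : {v : Fin (d+1) → ℤ // v ≠ 0},
    vnorm d ((fun i => ((v.1 i : ℝ))) ᵥ* (g : Matrix (Fin (d+1)) (Fin (d+1)) ℝ))

/-- The height of a lattice: the inverse of the length of a shortest nonzero vector. -/
def htX (d : ℕ) (x : Xspace d) : ℝ := (shortestLen d x.out)⁻¹

/-- `X_{<M}`. -/
def Xlt (d : ℕ) (M : ℝ) : Set (Xspace d) := {x | htX d x < M}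

/-- `X_{≥M}`. -/
def Xge (d : ℕ) (M : ℝ) : Set (Xspace d) := {x | M ≤ htX d x}

/-- `μ` is invariant under `T`. -/
def TInvariant {α : Type*} [MeasurableSpace α] (T : α → α) (μ : Measure α) : Prop :=
  ∀ s : Set α, MeasurableSet s → μ (T ⁻¹' s) = μ s

/-- A finite measurable partition of `α` (mod `μ`-null sets). -/
def IsMeasPartition {α : Type*} [MeasurableSpace α] (μ : Measure α) (P : Finset (Set α)) : Prop :=
  (∀ A ∈ P, MeasurableSet A) ∧ μ (⋃ A ∈ P, A)ᶜ = 0 ∧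
    ∀ A ∈ P, ∀ B ∈ P, A ≠ B → μ (A ∩ B) = 0

/-- The entropy `H_μ(P ∨ T⁻¹P ∨ ⋯ ∨ T^{-(n-1)}P)` of the `n`-fold dynamical refinement of the
partition `P`. -/
def joinEntropy {α : Type*} [MeasurableSpace α] (T : α → α) (μ : Measure α)
    (P : Finset (Set α)) (n : ℕ) : ℝ :=
  ∑ f ∈ Fintype.piFinset (fun _ : Fin n => P),
    Real.negMulLog ((μ (⋂ i : Fin n, T^[(i : ℕ)] ⁻¹' f i)).toReal)

/-- The dynamical entropy `h_μ(T, P) = lim_n H_μ(⋁_{i<n} T^{-i}P)/n = inf_n H_n/n`. -/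
def dynEntropy {α : Type*} [MeasurableSpace α] (T : α → α) (μ : Measure α)
    (P : Finset (Set α)) : ℝ≥0∞ :=
  ⨅ n : ℕ, ENNReal.ofReal (joinEntropy T μ P (n+1) / (n+1))

/-- The measure-theoretic (Kolmogorov–Sinai) entropy `h_μ(T)`, as the supremum of the dynamical
entropies over all finite measurable partitions. -/
def mEntropy {α : Type*} [MeasurableSpace α] (T : α → α) (μ : Measure α) : ℝ≥0∞ :=
  ⨆ P : {P : Finset (Set α) // IsMeasPartition μ P}, dynEntropy T μ P.1

/-- `μ` is a weak* limit of the sequence `μs` if for some subsequence the integrals of every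
compactly supported continuous function converge. -/
def IsWeakStarLimit {α : Type*} [TopologicalSpace α] [MeasurableSpace α]
    (μs : ℕ → Measure α) (μ : Measure α) : Prop :=
  ∃ φ : ℕ → ℕ, StrictMono φ ∧
    ∀ f : α → ℝ, Continuous f → HasCompactSupport f →
      Tendsto (fun k => ∫ x, f x ∂(μs (φ k))) atTop (𝓝 (∫ x, f x ∂μ))

/-- Abstract left-invariant metric on `G = SL_{d+1}(ℝ)`, standing for (the distance function of)
a left-invariant Riemannian metric. -/
structure GMetric (d : ℕ) where
  dist : SLR d → SLR d → ℝ
  nonneg : ∀ g h, 0 ≤ dist g h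
  eq_zero_iff : ∀ g h, dist g h = 0 ↔ g = h
  symm : ∀ g h, dist g h = dist h g
  triangle : ∀ g h k, dist g k ≤ dist g h + dist h k
  leftInvariant : ∀ g h k, dist (g * h) (g * k) = dist h k

/-- `d_X(Γg₁, Γg₂) = inf_{γ ∈ Γ} d_G(g₁, γg₂)`. -/
def dXq (d : ℕ) (D : GMetric d) (x y : Xspace d) : ℝ :=
  ⨅ γ : Gamma d, D.dist x.out ((γ : SLR d) * y.out)

/-- The rescaling property of the metric: `d_G(1,g) < ‖1-g‖ < c₀ d_G(1,g)` on the
ball of radius `η₀` about the identity. -/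
def MetricComparison (d : ℕ) (D : GMetric d) (η₀ c₀ : ℝ) : Prop :=
  0 < η₀ ∧ η₀ < 1 ∧ 1 < c₀ ∧
    ∀ g : SLR d, g ≠ 1 → D.dist 1 g < η₀ →
      D.dist 1 g < mnorm d (1 - (g : Matrix (Fin (d+1)) (Fin (d+1)) ℝ)) ∧
      mnorm d (1 - (g : Matrix (Fin (d+1)) (Fin (d+1)) ℝ)) < c₀ * D.dist 1 g

/-- `r` is an injectivity radius of `Y ⊆ X`: for every `x ∈ Y`, the map `g ↦ xg` is an isometry
from the radius-`r` ball in `G` onto the radius-`r` ball about `x` in `X`. -/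
def IsInjRadius (d : ℕ) (D : GMetric d) (r : ℝ) (Y : Set (Xspace d)) : Prop :=
  ∀ x ∈ Y,
    (∀ g h : SLR d, D.dist 1 g < r → D.dist 1 h < r →
      dXq d D (rTrans d g x) (rTrans d h x) = D.dist g h) ∧
    ∀ y : Xspace d, dXq d D x y < r → ∃ g : SLR d, D.dist 1 g < r ∧ y = rTrans d g x

/-- `E` is an `(n, ε)`-separated set for `T`. -/
def IsSeparatedSet (d : ℕ) (D : GMetric d) (T : Xspace d → Xspace d) (n : ℕ) (ε : ℝ)
    (E : Set (Xspace d)) : Prop :=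
  ∀ x ∈ E, ∀ y ∈ E, x ≠ y → ∃ i < n, ε ≤ dXq d D (T^[i] x) (T^[i] y)

/-- The matrix `g_t`: first `d` diagonal entries `M^{1/d}`, last row `(t₁/M, …, t_d/M, 1/M)`,
zeros elsewhere. -/
def gMat (d : ℕ) (M : ℝ) (t : Fin d → ℝ) : Matrix (Fin (d+1)) (Fin (d+1)) ℝ :=
  Matrix.of fun i j =>
    if hi : (i : ℕ) < d then (if i = j then M ^ (1/(d:ℝ)) else 0)
    else if hj : (j : ℕ) < d then t ⟨j, hj⟩ / M else 1 / M

lemma gMat_lowerTriangular (d : ℕ) (M : ℝ) (t : Fin d → ℝ) :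
    ∀ i j : Fin (d+1), i < j → gMat d M t i j = 0 := by
  intro i j hij
  have hi : (i : ℕ) < d := by
    have := j.isLt
    have := (Fin.lt_iff_val_lt_val.mp hij)
    omega
  simp [gMat, hi, Fin.ne_of_lt hij]

def gElt (d : ℕ) (hd : 0 < d) (M : ℝ) (hM : 0 < M) (t : Fin d → ℝ) : SLR d :=
  ⟨gMat d M t, by
    have hdet : (gMat d M t).det = ∏ i : Fin (d+1), gMat d M t i i := by
      apply Matrix.det_of_lowerTriangular
      intro i j hij
      exact gMat_lowerTriangular d M t i j hij
    rw [hdet, Fin.prod_univ_castSucc]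
    have h1 : ∀ i : Fin d, gMat d M t i.castSucc i.castSucc = M ^ (1/(d:ℝ)) := by
      intro i
      simp [gMat, Fin.is_lt]
    have h2 : gMat d M t (Fin.last d) (Fin.last d) = 1 / M := by
      simp [gMat]
    rw [Finset.prod_congr rfl (fun i _ => h1 i), h2, Finset.prod_const, Finset.card_univ,
      Fintype.card_fin, ← Real.rpow_natCast (M ^ (1/(d:ℝ))) d, ← Real.rpow_mul hM.le]
    rw [one_div, inv_mul_cancel₀ (Nat.cast_ne_zero.mpr hd.ne'), Real.rpow_one]
    field_simp⟩

/-- The unstable horospherical subgroup `U⁺` of `a`: identity matrices except for the first `d`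
entries of the last row. -/
def Uplus (d : ℕ) : Set (SLR d) :=
  {g | ∃ u : Fin d → ℝ, (g : Matrix (Fin (d+1)) (Fin (d+1)) ℝ) =
    (1 : Matrix (Fin (d+1)) (Fin (d+1)) ℝ) +
      Matrix.of (fun (i j : Fin (d+1)) => if h : (i : ℕ) = d ∧ (j : ℕ) < d then u ⟨j, h.2⟩ else 0)}

/-- The stable horospherical subgroup `U⁻` of `a`: identity matrices except for the first `d`
entries of the last column. -/
def Uminus (d : ℕ) : Set (SLR d) :=
  {g | ∃ u : Fin d → ℝ, (g : Matrix (Fin (d+1)) (Fin (d+1)) ℝ) =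
    (1 : Matrix (Fin (d+1)) (Fin (d+1)) ℝ) +
      Matrix.of (fun (i j : Fin (d+1)) => if h : (i : ℕ) < d ∧ (j : ℕ) = d then u ⟨i, h.1⟩ else 0)}

end

/-! Write `r = e^{-N/d}` and `s = M^{1+1/d}`. For an integer vector `(n, m)` the
coordinates of `(n, m) g_t a^N` are `(n_i s + m t_i) e^{N/d} / M` and `m e^{-N} / M`, so
`ht(T^N x_t) ≥ 16M` forces `1 ≤ |m| ≤ e^N/16` and, for every `i`, `m t_i` to lie within `r/8`
of `sℤ`. For fixed `m` the `t_i ∈ [0, r]` with this property lie in at most `(m r + r/8)/s + 1`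
intervals of length `r/(4m)`, of total length at most `max (r/(4m)) (4r²/7)`. Taking `d`-th
powers (`d ≥ 2`) and summing over `m ≤ e^N/16` with `∑ 1/m² ≤ 2`, these `t` fill at most
`(2/4^d + (4/7)^d/16) e^{-N}` of the cube `[0, r]^d`, whose volume is `e^{-N}`. -/

lemma Tmap_iterate_mkX (d : ℕ) (hd0 : 0 < d) (N : ℕ) (g : SLR d) :
    (Tmap d hd0)^[N] (mkX d g) = mkX d (g * aElt d hd0 ^ N) := by
  induction N generalizing g with
  | zero => simp [mkX]
  | succ n ih =>
    rw [Function.iterate_succ_apply, pow_succ', ← mul_assoc]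
    exact ih _

lemma vecMul_vecMul_inv_cancel {n R : Type*} [Fintype n] [DecidableEq n] [CommRing R]
    (v : n → R) (γ : Matrix.SpecialLinearGroup n R) :
    v ᵥ* (γ : Matrix n n R) ᵥ* ↑γ⁻¹ = v := by
  rw [vecMul_vecMul, ← Matrix.SpecialLinearGroup.coe_mul, mul_inv_cancel,
    Matrix.SpecialLinearGroup.coe_one, vecMul_one]

lemma shortestLen_mul_of_mem_Gamma {d : ℕ} {γ : SLR d} (hγ : γ ∈ Gamma d) (g : SLR d) :
    shortestLen d (γ * g) = shortestLen d g := by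
  obtain ⟨γz, rfl⟩ := hγ
  let e : {v : Fin (d+1) → ℤ // v ≠ 0} → {v : Fin (d+1) → ℤ // v ≠ 0} := fun v =>
    ⟨v.1 ᵥ* (γz : Matrix (Fin (d+1)) (Fin (d+1)) ℤ), fun h => v.2 <| by
      rw [← vecMul_vecMul_inv_cancel v.1 γz, h, zero_vecMul]⟩
  have he : Function.Surjective e := fun w => by
    refine ⟨⟨w.1 ᵥ* ↑γz⁻¹, fun h => w.2 ?_⟩, Subtype.ext ?_⟩
    · rw [← vecMul_vecMul_inv_cancel w.1 γz⁻¹, inv_inv, h, zero_vecMul]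
    · simpa only [inv_inv] using vecMul_vecMul_inv_cancel w.1 γz⁻¹
  rw [shortestLen, shortestLen]
  conv_rhs => rw [← he.iInf_comp]
  congr 1
  funext v
  rw [Matrix.SpecialLinearGroup.coe_mul, ← vecMul_vecMul]
  congr 2
  funext j
  exact (RingHom.map_vecMul (Int.castRingHom ℝ) (↑γz) v.1 j).symm

lemma htX_mkX {d : ℕ} (g : SLR d) : htX d (mkX d g) = (shortestLen d g)⁻¹ := by
  have hg : g * (mkX d g).out⁻¹ ∈ Gamma d :=
    QuotientGroup.rightRel_apply.mp (Quotient.exact (Quotient.out_eq (mkX d g)))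
  have hout : (mkX d g).out = (g * (mkX d g).out⁻¹)⁻¹ * g := by group
  rw [htX, hout, shortestLen_mul_of_mem_Gamma (inv_mem hg)]

lemma coe_aElt_pow (d : ℕ) (hd0 : 0 < d) (N : ℕ) :
    ((aElt d hd0 ^ N : SLR d) : Matrix (Fin (d+1)) (Fin (d+1)) ℝ) =
      diagonal fun i : Fin (d+1) => if (i : ℕ) < d then Real.exp (N / d) else Real.exp (-N) := by
  rw [Matrix.SpecialLinearGroup.coe_pow]
  change aMat d ^ N = _
  rw [aMat, diagonal_pow]
  congr 1
  funext i
  rw [Pi.pow_apply]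
  split_ifs <;> rw [← Real.exp_nat_mul] <;> ring_nf

def nearLattice (s ε : ℝ) (m : ℤ) : Set ℝ := {τ | ∃ n : ℤ, |n * s + m * τ| < ε}

lemma nearLattice_neg (s ε : ℝ) (m : ℤ) : nearLattice s ε (-m) = nearLattice s ε m := by
  ext τ
  constructor <;> rintro ⟨n, hn⟩ <;> refine ⟨-n, ?_⟩ <;>
    · rw [← abs_neg]; convert hn using 2; push_cast; ring

lemma le_vnorm (d : ℕ) (w : Fin (d+1) → ℝ) (i : Fin (d+1)) : |w i| ≤ vnorm d w :=
  le_ciSup (f := fun i => |w i|) (Set.finite_range _).bddAbove i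

section LatticeVectors

variable {d : ℕ} (hd0 : 0 < d) {M : ℝ} (hM0 : 0 < M) (t : Fin d → ℝ) (N : ℕ)

lemma vecMul_gElt_mul_aElt_pow_castSucc (u : Fin (d+1) → ℝ) (j : Fin d) :
    (u ᵥ* ↑(gElt d hd0 M hM0 t * aElt d hd0 ^ N)) j.castSucc =
      (u j.castSucc * M ^ (1 / (d:ℝ)) + u (Fin.last d) * (t j / M)) * Real.exp (N / d) := by
  rw [Matrix.SpecialLinearGroup.coe_mul, coe_aElt_pow, ← vecMul_vecMul, vecMul_diagonal,
    if_pos (by simp)]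
  congr 1
  change (u ᵥ* gMat d M t) j.castSucc = _
  rw [vecMul, dotProduct, Fin.sum_univ_castSucc, Finset.sum_eq_single j]
  · simp [gMat]
  · intro k _ hk
    simp [gMat, hk]
  · simp

lemma vecMul_gElt_mul_aElt_pow_last (u : Fin (d+1) → ℝ) :
    (u ᵥ* ↑(gElt d hd0 M hM0 t * aElt d hd0 ^ N)) (Fin.last d) =
      u (Fin.last d) / M * Real.exp (-N) := by
  rw [Matrix.SpecialLinearGroup.coe_mul, coe_aElt_pow, ← vecMul_vecMul, vecMul_diagonal,
    if_neg (by simp)]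
  congr 1
  change (u ᵥ* gMat d M t) (Fin.last d) = _
  rw [vecMul, dotProduct, Fin.sum_univ_castSucc, Finset.sum_eq_zero]
  · simp [gMat, div_eq_mul_inv]
  · intro k _
    simp [gMat, Fin.ext_iff, k.isLt.ne]

variable (v : Fin (d+1) → ℤ)

lemma one_le_vnorm_of_last_eq_zero (hM : 1 ≤ M) (hv : v ≠ 0) (hlast : v (Fin.last d) = 0) :
    1 ≤ vnorm d ((fun i => (v i : ℝ)) ᵥ* ↑(gElt d hd0 M hM0 t * aElt d hd0 ^ N)) := by
  obtain ⟨j, hj⟩ : ∃ j : Fin d, v j.castSucc ≠ 0 := by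
    by_contra! h
    exact hv (funext fun i => Fin.lastCases hlast h i)
  refine le_trans ?_ (le_vnorm d _ j.castSucc)
  rw [vecMul_gElt_mul_aElt_pow_castSucc, hlast, Int.cast_zero, zero_mul, add_zero]
  have hv1 : (1:ℝ) ≤ |(v j.castSucc : ℝ)| := by exact_mod_cast Int.one_le_abs hj
  have hM1 : (1:ℝ) ≤ M ^ (1 / (d:ℝ)) := Real.one_le_rpow hM (by positivity)
  have he1 : (1:ℝ) ≤ Real.exp (N / d) := Real.one_le_exp (by positivity)
  rw [abs_mul, abs_mul, abs_of_pos (by positivity : (0:ℝ) < M ^ (1 / (d:ℝ))),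
    abs_of_pos (Real.exp_pos _)]
  calc (1:ℝ) = 1 * 1 * 1 := by ring
    _ ≤ _ := by gcongr

lemma abs_last_mul_exp_div_le_vnorm :
    |(v (Fin.last d) : ℝ)| * Real.exp (-N) / M ≤
      vnorm d ((fun i => (v i : ℝ)) ᵥ* ↑(gElt d hd0 M hM0 t * aElt d hd0 ^ N)) := by
  refine le_trans (le_of_eq ?_) (le_vnorm d _ (Fin.last d))
  rw [vecMul_gElt_mul_aElt_pow_last, abs_mul, abs_div, abs_of_pos hM0,
    abs_of_pos (Real.exp_pos _)]
  ring

lemma le_vnorm_of_notMem_nearLattice {ε : ℝ} {i : Fin d}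
    (hi : t i ∉ nearLattice (M * M ^ (1 / (d:ℝ))) ε (v (Fin.last d))) :
    ε * Real.exp (N / d) / M ≤
      vnorm d ((fun i => (v i : ℝ)) ᵥ* ↑(gElt d hd0 M hM0 t * aElt d hd0 ^ N)) := by
  refine le_trans ?_ (le_vnorm d _ i.castSucc)
  have hε : ε ≤ |v i.castSucc * (M * M ^ (1 / (d:ℝ))) + v (Fin.last d) * t i| :=
    not_lt.mp fun h => hi ⟨_, h⟩
  rw [vecMul_gElt_mul_aElt_pow_castSucc, abs_mul, abs_of_pos (Real.exp_pos _)]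
  have : (v i.castSucc : ℝ) * M ^ (1 / (d:ℝ)) + v (Fin.last d) * (t i / M) =
      (v i.castSucc * (M * M ^ (1 / (d:ℝ))) + v (Fin.last d) * t i) / M := by
    field_simp
  rw [this, abs_div, abs_of_pos hM0, div_mul_eq_mul_div]
  gcongr

lemma min_le_shortestLen_gElt_mul_aElt_pow (hM : 1 ≤ M) (K : ℕ)
    (hgood : ∀ m ∈ Finset.Icc 1 K,
      ∃ i, t i ∉ nearLattice (M * M ^ (1 / (d:ℝ))) (Real.exp (-N / d) / 8) m) :
    min (1 / (8 * M)) ((K + 1) * Real.exp (-N) / M) ≤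
      shortestLen d (gElt d hd0 M hM0 t * aElt d hd0 ^ N) := by
  have : Nonempty {v : Fin (d+1) → ℤ // v ≠ 0} := ⟨⟨1, one_ne_zero⟩⟩
  refine le_ciInf fun ⟨v, hv⟩ => ?_
  by_cases hlast : v (Fin.last d) = 0
  · refine (min_le_left _ _).trans
      (le_trans ?_ (one_le_vnorm_of_last_eq_zero hd0 hM0 t N v hM hv hlast))
    rw [div_le_one (by positivity)]
    linarith
  by_cases hlarge : K < |v (Fin.last d)|
  · refine (min_le_right _ _).trans
      (le_trans ?_ (abs_last_mul_exp_div_le_vnorm hd0 hM0 t N v))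
    have : (K:ℝ) + 1 ≤ |(v (Fin.last d) : ℝ)| := by
      rw [← Int.cast_abs]; exact_mod_cast hlarge
    gcongr
  · rw [Int.abs_eq_natAbs, not_lt, Nat.cast_le] at hlarge
    obtain ⟨i, hi⟩ := hgood _ (Finset.mem_Icc.mpr ⟨Int.natAbs_pos.mpr hlast, hlarge⟩)
    have hi' : t i ∉
        nearLattice (M * M ^ (1 / (d:ℝ))) (Real.exp (-N / d) / 8) (v (Fin.last d)) := by
      rcases Int.natAbs_eq (v (Fin.last d)) with h | h
      · rwa [h]
      · rwa [h, nearLattice_neg]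
    refine (min_le_left _ _).trans
      (le_trans (le_of_eq ?_) (le_vnorm_of_notMem_nearLattice hd0 hM0 t N v hi'))
    rw [div_mul_eq_mul_div, ← Real.exp_add, neg_div, neg_add_cancel, Real.exp_zero]
    ring

lemma htX_iterate_gElt_lt (hM : 1 ≤ M)
    (hgood : ∀ m ∈ Finset.Icc 1 ⌊Real.exp N / 16⌋₊,
      ∃ i, t i ∉ nearLattice (M * M ^ (1 / (d:ℝ))) (Real.exp (-N / d) / 8) m) :
    htX d ((Tmap d hd0)^[N] (mkX d (gElt d hd0 M hM0 t))) < 16 * M := by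
  rw [Tmap_iterate_mkX, htX_mkX]
  have hbound := min_le_shortestLen_gElt_mul_aElt_pow hd0 hM0 t N hM _ hgood
  have hK : Real.exp N / 16 < ⌊Real.exp N / 16⌋₊ + 1 := Nat.lt_floor_add_one _
  have hlt : 1 / (16 * M) <
      min (1 / (8 * M)) ((⌊Real.exp N / 16⌋₊ + 1) * Real.exp (-N) / M) := by
    refine lt_min (by gcongr; norm_num) ?_
    rw [div_lt_div_iff₀ (by positivity) hM0, Real.exp_neg]
    field_simp
    linarith
  calc (shortestLen d _)⁻¹ < (1 / (16 * M))⁻¹ :=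
        inv_strictAnti₀ (by positivity) (hlt.trans_le hbound)
    _ = 16 * M := by rw [one_div, inv_inv]

end LatticeVectors

lemma nearLattice_inter_Icc_subset {s ε r : ℝ} (hs : 0 < s) (hεs : ε ≤ s) {m : ℕ}
    (hm : 0 < m) :
    nearLattice s ε m ∩ Set.Icc 0 r ⊆
      ⋃ k ∈ Finset.range (⌊(m * r + ε) / s⌋₊ + 1),
        Set.Ioo ((k * s - ε) / m) ((k * s + ε) / m) := by
  rintro τ ⟨⟨n, hn⟩, hτ0, hτr⟩
  rw [abs_lt, Int.cast_natCast] at hn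
  have hm' : (0:ℝ) < m := by exact_mod_cast hm
  have hmτ : (m:ℝ) * τ ≤ m * r := by gcongr
  have hn0 : 0 ≤ -n := by
    by_contra! h
    have : (n:ℝ) ≥ 1 := by exact_mod_cast (by omega : n ≥ 1)
    nlinarith
  lift -n to ℕ using hn0 with k hk
  have hks : (k:ℝ) * s = -(n * s) := by
    rw [show (k:ℝ) = ((k:ℤ):ℝ) by norm_cast, hk]; push_cast; ring
  have hkle : k ≤ ⌊(m * r + ε) / s⌋₊ :=
    Nat.le_floor (by rw [le_div_iff₀ hs]; linarith)
  refine Set.mem_biUnion (Finset.mem_range.mpr (Nat.lt_succ_of_le hkle)) ⟨?_, ?_⟩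
  · rw [div_lt_iff₀ hm']; linarith
  · rw [lt_div_iff₀ hm']; linarith

lemma volume_nearLattice_inter_Icc_le {s ε r : ℝ} (hs : 0 < s) (hεs : ε ≤ s) {m : ℕ}
    (hm : 0 < m) :
    volume (nearLattice s ε m ∩ Set.Icc 0 r) ≤
      ENNReal.ofReal ((⌊(m * r + ε) / s⌋₊ + 1) * (2 * ε / m)) := by
  refine (measure_mono (nearLattice_inter_Icc_subset hs hεs hm)).trans
    ((measure_biUnion_finset_le _ _).trans (le_of_eq ?_))
  have hlen : ∀ k : ℕ, volume (Set.Ioo ((k * s - ε) / m) ((k * s + ε) / m)) =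
      ENNReal.ofReal (2 * ε / m) := fun k => by
    rw [Real.volume_Ioo]
    congr 1
    ring
  simp only [hlen, Finset.sum_const, Finset.card_range, nsmul_eq_mul]
  rw [ENNReal.ofReal_mul (by positivity), ← Nat.cast_add_one, ENNReal.ofReal_natCast]

lemma volume_nearLattice_inter_Icc_le_max {s r : ℝ} (hs : 1 ≤ s) (hr0 : 0 < r) (hr1 : r ≤ 1)
    {m : ℕ} (hm : 0 < m) :
    volume (nearLattice s (r / 8) m ∩ Set.Icc 0 r) ≤
      ENNReal.ofReal (max (r / (4 * m)) (4 * r ^ 2 / 7)) := by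
  refine (volume_nearLattice_inter_Icc_le (by linarith) (by linarith) hm).trans
    (ENNReal.ofReal_le_ofReal ?_)
  have hm' : (0:ℝ) < m := by exact_mod_cast hm
  by_cases hsmall : (m * r + r / 8) / s < 1
  · rw [Nat.floor_eq_zero.mpr hsmall]
    refine le_of_eq_of_le ?_ (le_max_left _ _)
    field_simp
    ring
  · refine le_trans ?_ (le_max_right _ _)
    have hfloor : (⌊(m * r + r / 8) / s⌋₊ : ℝ) ≤ m * r + r / 8 :=
      (Nat.floor_le (by positivity)).trans (div_le_self (by positivity) hs)
    have hmr : 7 / 8 ≤ (m:ℝ) * r := by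
      rw [not_lt, one_le_div (by linarith)] at hsmall
      linarith
    rw [← sub_nonneg]
    have : 4 * r ^ 2 / 7 - (⌊(m * r + r / 8) / s⌋₊ + 1) * (2 * (r / 8) / m) =
        r / (28 * m) * (16 * (m * r) - 7 * (⌊(m * r + r / 8) / s⌋₊ + 1)) := by
      field_simp
      ring
    rw [this]
    apply mul_nonneg (by positivity)
    nlinarith

lemma sum_Icc_inv_sq_le_two (K : ℕ) : ∑ m ∈ Finset.Icc 1 K, ((m:ℝ) ^ 2)⁻¹ ≤ 2 := by
  have hIcc : Finset.Icc 1 K = Finset.Ioo 0 (K + 1) := by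
    ext m; simp only [Finset.mem_Icc, Finset.mem_Ioo]; omega
  simpa [hIcc] using sum_Ioo_inv_sq_le (α := ℝ) 0 (K + 1)

lemma sum_max_pow_le {d K : ℕ} (hd : 2 ≤ d) {r : ℝ} (hr0 : 0 < r)
    (hKr : K * r ^ d ≤ 1 / 16) :
    ∑ m ∈ Finset.Icc 1 K, max (r / (4 * m)) (4 * r ^ 2 / 7) ^ d ≤
      (2 * (1 / 4) ^ d + (4 / 7) ^ d / 16) * r ^ d := by
  have hterm : ∀ m ∈ Finset.Icc 1 K, max (r / (4 * m)) (4 * r ^ 2 / 7) ^ d ≤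
      (1 / 4) ^ d * r ^ d * ((m:ℝ) ^ 2)⁻¹ + (4 / 7) ^ d * r ^ d * r ^ d := by
    intro m hm
    have hm1 : (1:ℝ) ≤ m := by exact_mod_cast (Finset.mem_Icc.mp hm).1
    have hsmall : (r / (4 * m)) ^ d ≤ (1 / 4) ^ d * r ^ d * ((m:ℝ) ^ 2)⁻¹ := by
      have hinv : ((m:ℝ)⁻¹) ^ d ≤ ((m:ℝ)⁻¹) ^ 2 :=
        pow_le_pow_of_le_one (by positivity) (inv_le_one_of_one_le₀ hm1) hd
      calc (r / (4 * m)) ^ d = (1 / 4) ^ d * r ^ d * ((m:ℝ)⁻¹) ^ d := by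
            rw [← mul_pow, ← mul_pow]; ring_nf
        _ ≤ _ := by rw [← inv_pow]; gcongr
    have hlarge : (4 * r ^ 2 / 7) ^ d = (4 / 7) ^ d * r ^ d * r ^ d := by
      rw [← mul_pow, ← mul_pow]; ring_nf
    rcases max_choice (r / (4 * m)) (4 * r ^ 2 / 7) with h | h <;> rw [h]
    · have : 0 ≤ (4 / 7 : ℝ) ^ d * r ^ d * r ^ d := by positivity
      linarith
    · rw [hlarge]
      have : 0 ≤ (1 / 4 : ℝ) ^ d * r ^ d * ((m:ℝ) ^ 2)⁻¹ := by positivity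
      linarith
  calc _ ≤ ∑ m ∈ Finset.Icc 1 K,
          ((1 / 4) ^ d * r ^ d * ((m:ℝ) ^ 2)⁻¹ + (4 / 7) ^ d * r ^ d * r ^ d) :=
        Finset.sum_le_sum hterm
    _ = (1 / 4) ^ d * r ^ d * ∑ m ∈ Finset.Icc 1 K, ((m:ℝ) ^ 2)⁻¹ +
          (4 / 7) ^ d * r ^ d * (K * r ^ d) := by
        rw [Finset.sum_add_distrib, ← Finset.mul_sum, Finset.sum_const, Nat.card_Icc,
          nsmul_eq_mul, Nat.add_sub_cancel]
        ring
    _ ≤ (1 / 4) ^ d * r ^ d * 2 + (4 / 7) ^ d * r ^ d * (1 / 16) := by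
        gcongr
        exact sum_Icc_inv_sq_le_two K
    _ = _ := by ring

lemma volume_biUnion_pi_nearLattice_le {d K : ℕ} (hd : 2 ≤ d) {s r : ℝ} (hs : 1 ≤ s)
    (hr0 : 0 < r) (hr1 : r ≤ 1) (hKr : K * r ^ d ≤ 1 / 16) :
    volume (⋃ m ∈ Finset.Icc 1 K,
        Set.univ.pi fun _ : Fin d => nearLattice s (r / 8) m ∩ Set.Icc 0 r) ≤
      ENNReal.ofReal ((2 * (1 / 4) ^ d + (4 / 7) ^ d / 16) * r ^ d) := by
  refine (measure_biUnion_finset_le _ _).trans ?_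
  calc _ ≤ ∑ m ∈ Finset.Icc 1 K, ENNReal.ofReal (max (r / (4 * m)) (4 * r ^ 2 / 7) ^ d) := by
        refine Finset.sum_le_sum fun m hm => ?_
        rw [volume_pi_pi, Finset.prod_const, Finset.card_univ, Fintype.card_fin,
          ENNReal.ofReal_pow (by positivity)]
        gcongr
        exact volume_nearLattice_inter_Icc_le_max hs hr0 hr1 (Finset.mem_Icc.mp hm).1
    _ = ENNReal.ofReal (∑ m ∈ Finset.Icc 1 K, max (r / (4 * m)) (4 * r ^ 2 / 7) ^ d) :=
        (ENNReal.ofReal_sum_of_nonneg fun _ _ => by positivity).symm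
    _ ≤ _ := ENNReal.ofReal_le_ofReal (sum_max_pow_le hd hr0 hKr)

lemma fifteen_sixteenths_pow_sub_le {d : ℕ} (hd : 2 ≤ d) :
    ((15:ℝ) / 16) ^ d - (1 / 4) ^ d ≤ 1 - (2 * (1 / 4) ^ d + (4 / 7) ^ d / 16) := by
  have h15 := pow_le_pow_of_le_one (by norm_num : (0:ℝ) ≤ 15 / 16) (by norm_num) hd
  have h4 := pow_le_pow_of_le_one (by norm_num : (0:ℝ) ≤ 1 / 4) (by norm_num) hd
  have h47 := pow_le_pow_of_le_one (by norm_num : (0:ℝ) ≤ 4 / 7) (by norm_num) hd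
  nlinarith

/-- The set `A_N` of parameters `t ∈ [0, e^{-N/d}]^d` for which
`ht(T^N(x_t)) < 16M` has Lebesgue measure at least `(15^d/16^d - 1/4^d)e^{-N}`. -/
theorem measure_AN_ge (d : ℕ) (hd0 : 0 < d) (hd : 2 ≤ d) (M : ℝ) (hM0 : 0 < M) (hM : 1 ≤ M)
    (N : ℕ) :
    ENNReal.ofReal ((((15:ℝ)/16)^d - ((1:ℝ)/4)^d) * Real.exp (-(N:ℝ))) ≤
      volume {t : Fin d → ℝ |
        (∀ i, t i ∈ Set.Icc (0:ℝ) (Real.exp (-(N:ℝ)/(d:ℝ)))) ∧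
        htX d ((Tmap d hd0)^[N] (mkX d (gElt d hd0 M hM0 t))) < 16*M} := by
  set r := Real.exp (-(N:ℝ) / d)
  set K := ⌊Real.exp N / 16⌋₊
  have hr0 : 0 < r := Real.exp_pos _
  have hr1 : r ≤ 1 :=
    Real.exp_le_one_iff.mpr (div_nonpos_of_nonpos_of_nonneg (by simp) d.cast_nonneg)
  have hrd : r ^ d = Real.exp (-N) := by rw [← Real.exp_nat_mul]; field_simp
  have hKr : K * r ^ d ≤ 1 / 16 := by
    rw [hrd, Real.exp_neg, ← div_eq_mul_inv, div_le_iff₀ (Real.exp_pos _)]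
    linarith [Nat.floor_le (by positivity : 0 ≤ Real.exp N / 16)]
  have hs : 1 ≤ M * M ^ (1 / (d:ℝ)) :=
    one_le_mul_of_one_le_of_one_le hM (Real.one_le_rpow hM (by positivity))
  set cube := Set.univ.pi fun _ : Fin d => Set.Icc 0 r
  set bad := ⋃ m ∈ Finset.Icc 1 K,
    Set.univ.pi fun _ : Fin d => nearLattice (M * M ^ (1 / (d:ℝ))) (r / 8) m ∩ Set.Icc 0 r
  have hsub : cube \ bad ⊆ {t | (∀ i, t i ∈ Set.Icc 0 r) ∧
      htX d ((Tmap d hd0)^[N] (mkX d (gElt d hd0 M hM0 t))) < 16 * M} := by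
    rintro t ⟨hcube, hbad⟩
    refine ⟨fun i => hcube i trivial, htX_iterate_gElt_lt hd0 hM0 t N hM fun m hm => ?_⟩
    by_contra! h
    exact hbad (Set.mem_biUnion hm fun i _ => ⟨h i, hcube i trivial⟩)
  have hcube : volume cube = ENNReal.ofReal (Real.exp (-N)) := by
    rw [volume_pi_pi, Finset.prod_const, Finset.card_univ, Fintype.card_fin, Real.volume_Icc,
      sub_zero, ← ENNReal.ofReal_pow hr0.le, hrd]
  calc _ ≤ ENNReal.ofReal (Real.exp (-N)) -
        ENNReal.ofReal ((2 * (1 / 4) ^ d + (4 / 7) ^ d / 16) * Real.exp (-N)) := by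
        rw [← ENNReal.ofReal_sub _ (by positivity)]
        exact ENNReal.ofReal_le_ofReal (by
          nlinarith [fifteen_sixteenths_pow_sub_le hd, Real.exp_pos (-N)])
    _ ≤ volume cube - volume bad := by
        rw [hcube, ← hrd]
        gcongr
        exact volume_biUnion_pi_nearLattice_le hd hs hr0 hr1 hKr
    _ ≤ volume (cube \ bad) := le_measure_sdiff
    _ ≤ _ := measure_mono hsub
end

section
/- Let d ≥ 2, M ≥ 1 and let A_N' = A_N ∩ [ (1/16)e^{-N/d}, e^{-N/d} ]^d, where A_N = { t ∈ [0, e^{-N/d}]^d : ht(T^N(x_t)) < 16M }. Partition [ (1/16)e^{-N/d}, e^{-N/d} ]^d into ⌊e^N⌋^d congruent d-cubes of side length (15/16)e^{-N(d+1)/d}, and inside each take the concentric closed d-cube of side length (13/16)e^{-N(d+1)/d}. Then for all sufficiently large N, at least ⌊e^N⌋^d − ⌈(4/13)^d e^{dN}⌉ ≥ (1/13)e^{dN} of these smaller concentric d-cubes have nonempty intersection with A_N'. -/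
open MeasureTheory Filter Topology Matrix ENNReal

/-- `A_N`: parameters `t ∈ [0, e^{-N/d}]^d` with `ht(T^N(x_t)) < 16M`. -/
def ANset (d : ℕ) (hd : 0 < d) (M : ℝ) (hM : 0 < M) (N : ℕ) : Set (Fin d → ℝ) :=
  {t | (∀ i, t i ∈ Set.Icc (0:ℝ) (Real.exp (-(N:ℝ)/(d:ℝ)))) ∧
    htX d ((Tmap d hd)^[N] (mkX d (gElt d hd M hM t))) < 16*M}

/-- `A_N' = A_N ∩ [(1/16)e^{-N/d}, e^{-N/d}]^d`. -/
def ANset' (d : ℕ) (hd : 0 < d) (M : ℝ) (hM : 0 < M) (N : ℕ) : Set (Fin d → ℝ) :=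
  ANset d hd M hM N ∩
    {t | ∀ i, t i ∈ Set.Icc (Real.exp (-(N:ℝ)/(d:ℝ))/16) (Real.exp (-(N:ℝ)/(d:ℝ)))}

/-- The closed `d`-cube of side length `(13/16)e^{-N(d+1)/d}` concentric with the `k`-th cell of
the partition of `[(1/16)e^{-N/d}, e^{-N/d}]^d` into `⌊e^N⌋^d` congruent subcubes. -/
def innerCube (d N : ℕ) (k : Fin d → Fin ⌊Real.exp (N:ℝ)⌋₊) : Set (Fin d → ℝ) :=
  {t | ∀ i, t i ∈ Set.Icc
    (Real.exp (-(N:ℝ)/(d:ℝ))/16 +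
      ((k i : ℝ) + 1/2) * ((15/16) * Real.exp (-(N:ℝ)/(d:ℝ)) / (⌊Real.exp (N:ℝ)⌋₊ : ℝ)) -
      (13/16) * Real.exp (-(N:ℝ)*((d:ℝ)+1)/(d:ℝ)) / 2)
    (Real.exp (-(N:ℝ)/(d:ℝ))/16 +
      ((k i : ℝ) + 1/2) * ((15/16) * Real.exp (-(N:ℝ)/(d:ℝ)) / (⌊Real.exp (N:ℝ)⌋₊ : ℝ)) +
      (13/16) * Real.exp (-(N:ℝ)*((d:ℝ)+1)/(d:ℝ)) / 2)}

/-!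
Cut the box `[ε/16, ε]^d`, `ε = e^{-N/d}`, into `⌊e^N⌋^d` closed cells of side `s`, each containing
its inner cube of side `σ`; cubes are closed balls for the sup metric of `Fin d → ℝ`. A cell whose
inner cube misses `A_N'` carries at most `s^d - σ^d` of the measure of `A_N'`, so summing over the
cells, the lower bound on `m(A_N')` leaves room for at most `(1/4)^d e^{-N} / σ^d = (4/13)^d e^{dN}`
such cells. The second inequality is elementary: `⌊e^N⌋^d ≈ e^{dN}` while `(4/13)^d ≤ 4/13`.
-/

open Metric Set
open scoped Finset

theorem exists_mem_closedBall_of_mem_Icc {a s t : ℝ} (hs : 0 < s) {n : ℕ} (hn : 0 < n)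
    (ht : t ∈ Icc a (a + n * s)) : ∃ k : Fin n, t ∈ closedBall (a + (k + 1 / 2) * s) (s / 2) := by
  have hcell : ∀ k : ℝ, a + k * s ≤ t → t ≤ a + (k + 1) * s →
      t ∈ closedBall (a + (k + 1 / 2) * s) (s / 2) := fun k h₁ h₂ => by
    rw [Real.closedBall_eq_Icc]; constructor <;> linarith
  rcases ht.2.eq_or_lt with htop | hlt
  · refine ⟨⟨n - 1, Nat.sub_lt hn one_pos⟩, hcell _ ?_ ?_⟩ <;>
      simp only [Nat.cast_pred hn, htop] <;> nlinarith
  · set u := (t - a) / s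
    have hu : 0 ≤ u := div_nonneg (by linarith [ht.1]) hs.le
    have ht_eq : t = a + u * s := by rw [div_mul_cancel₀ _ hs.ne']; ring
    have hk : ⌊u⌋₊ < n := (Nat.floor_lt hu).2 ((div_lt_iff₀ hs).2 (by linarith))
    refine ⟨⟨⌊u⌋₊, hk⟩, hcell _ ?_ ?_⟩
    · calc a + ⌊u⌋₊ * s ≤ a + u * s := by gcongr; exact Nat.floor_le hu
        _ = t := ht_eq.symm
    · calc t = a + u * s := ht_eq
        _ ≤ a + (⌊u⌋₊ + 1) * s := by gcongr; exact (Nat.lt_floor_add_one u).le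

theorem pi_Icc_subset_iUnion_closedBall {ι : Type*} [Fintype ι] {a s : ℝ} (hs : 0 < s) {n : ℕ}
    (hn : 0 < n) :
    univ.pi (fun _ : ι => Icc a (a + n * s)) ⊆
      ⋃ k : ι → Fin n, closedBall (fun i => a + (k i + 1 / 2) * s) (s / 2) := by
  intro t ht
  choose k hk using fun i => exists_mem_closedBall_of_mem_Icc hs hn (ht i (mem_univ i))
  refine mem_iUnion.2 ⟨k, ?_⟩
  rw [closedBall_pi _ (by positivity)]
  exact fun i _ => hk i

section Counting

variable {α ι : Type*} [MeasurableSpace α] [Fintype ι] (μ : Measure α) {A : Set α}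
  {C I : ι → Set α}

open scoped Classical in
theorem measure_add_sum_disjoint_le (hI : ∀ k, MeasurableSet (I k)) (hIC : ∀ k, I k ⊆ C k)
    (hA : A ⊆ ⋃ k, C k) :
    μ A + ∑ k with Disjoint (I k) A, μ (I k) ≤ ∑ k, μ (C k) := by
  have hcell : ∀ k, μ (A ∩ C k) + (if Disjoint (I k) A then μ (I k) else 0) ≤ μ (C k) := by
    intro k
    split_ifs with h
    · rw [← measure_union (h.symm.mono_left inter_subset_left) (hI k)]
      exact measure_mono (union_subset inter_subset_right (hIC k))
    · simpa using measure_mono inter_subset_right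
  have hcover : μ A ≤ ∑ k, μ (A ∩ C k) := by
    calc μ A = μ (⋃ k, A ∩ C k) := by rw [← inter_iUnion, inter_eq_self_of_subset_left hA]
      _ ≤ _ := measure_iUnion_fintype_le μ _
  calc μ A + ∑ k with Disjoint (I k) A, μ (I k)
      ≤ ∑ k, μ (A ∩ C k) + ∑ k, if Disjoint (I k) A then μ (I k) else 0 := by
        rw [Finset.sum_filter]; exact add_le_add_left hcover _
    _ = ∑ k, (μ (A ∩ C k) + if Disjoint (I k) A then μ (I k) else 0) :=
        Finset.sum_add_distrib.symm
    _ ≤ ∑ k, μ (C k) := Finset.sum_le_sum fun k _ => hcell k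

open scoped Classical in
theorem measure_add_card_disjoint_mul_le (hI : ∀ k, MeasurableSet (I k)) (hIC : ∀ k, I k ⊆ C k)
    (hA : A ⊆ ⋃ k, C k) {v V : ℝ≥0∞} (hv : ∀ k, v ≤ μ (I k)) (hV : ∀ k, μ (C k) ≤ V) :
    μ A + #{k | Disjoint (I k) A} * v ≤ Fintype.card ι * V := by
  calc μ A + #{k | Disjoint (I k) A} * v
      ≤ μ A + ∑ k with Disjoint (I k) A, μ (I k) := by
        rw [← nsmul_eq_mul, ← Finset.sum_const]; gcongr with k; exact hv k
    _ ≤ ∑ k, μ (C k) := measure_add_sum_disjoint_le μ hI hIC hA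
    _ ≤ ∑ _k : ι, V := Finset.sum_le_sum fun k _ => hV k
    _ = Fintype.card ι * V := by rw [Finset.sum_const, nsmul_eq_mul, Finset.card_univ]

end Counting

noncomputable section Cells

variable (d N : ℕ)

def cellSide : ℝ := (15/16) * Real.exp (-(N:ℝ)/(d:ℝ)) / (⌊Real.exp (N:ℝ)⌋₊ : ℝ)

def innerSide : ℝ := (13/16) * Real.exp (-(N:ℝ)*((d:ℝ)+1)/(d:ℝ))

def cellCenter (k : Fin d → Fin ⌊Real.exp (N:ℝ)⌋₊) : Fin d → ℝ :=
  fun i => Real.exp (-(N:ℝ)/(d:ℝ))/16 + ((k i : ℝ) + 1/2) * cellSide d N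

theorem floor_exp_natCast_pos : 0 < ⌊Real.exp (N:ℝ)⌋₊ :=
  Nat.floor_pos.2 (Real.one_le_exp N.cast_nonneg)

theorem cellSide_pos : 0 < cellSide d N := by
  have := floor_exp_natCast_pos N
  unfold cellSide; positivity

theorem innerSide_pos : 0 < innerSide d N := by
  unfold innerSide; positivity

theorem floor_exp_mul_cellSide :
    (⌊Real.exp (N:ℝ)⌋₊ : ℝ) * cellSide d N = 15/16 * Real.exp (-(N:ℝ)/(d:ℝ)) :=
  mul_div_cancel₀ _ (Nat.cast_ne_zero.2 (floor_exp_natCast_pos N).ne')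

theorem innerSide_le_cellSide (hd : 0 < d) : innerSide d N ≤ cellSide d N := by
  have hexp : Real.exp (-(N:ℝ)*((d:ℝ)+1)/(d:ℝ)) =
      Real.exp (-(N:ℝ)/(d:ℝ)) / Real.exp (N:ℝ) := by
    rw [← Real.exp_sub]; congr 1; field_simp; ring
  have hfloor : (⌊Real.exp (N:ℝ)⌋₊ : ℝ) ≤ Real.exp N := Nat.floor_le (Real.exp_pos _).le
  have hfloor_pos : (0:ℝ) < ⌊Real.exp (N:ℝ)⌋₊ := Nat.cast_pos.2 (floor_exp_natCast_pos N)
  rw [innerSide, cellSide, hexp, mul_div_assoc]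
  gcongr
  norm_num

theorem innerCube_eq_closedBall (k : Fin d → Fin ⌊Real.exp (N:ℝ)⌋₊) :
    innerCube d N k = closedBall (cellCenter d N k) (innerSide d N / 2) := by
  ext t
  rw [closedBall_pi _ (half_pos (innerSide_pos d N)).le]
  simp only [Real.closedBall_eq_Icc, mem_univ_pi]
  rfl

theorem box_subset_iUnion_cells :
    {t : Fin d → ℝ | ∀ i, t i ∈ Icc (Real.exp (-(N:ℝ)/(d:ℝ))/16) (Real.exp (-(N:ℝ)/(d:ℝ)))} ⊆
      ⋃ k, closedBall (cellCenter d N k) (cellSide d N / 2) := by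
  have hbox : Real.exp (-(N:ℝ)/(d:ℝ))/16 + ⌊Real.exp (N:ℝ)⌋₊ * cellSide d N =
      Real.exp (-(N:ℝ)/(d:ℝ)) := by
    rw [floor_exp_mul_cellSide]; ring
  have := pi_Icc_subset_iUnion_closedBall (ι := Fin d) (cellSide_pos d N)
    (floor_exp_natCast_pos N) (a := Real.exp (-(N:ℝ)/(d:ℝ))/16)
  rw [hbox] at this
  exact fun t ht => this fun i _ => ht i

end Cells

theorem Real.volume_pi_closedBall_half {ι : Type*} [Fintype ι] (x : ι → ℝ) {r : ℝ} (hr : 0 ≤ r) :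
    volume (closedBall x (r / 2)) = ENNReal.ofReal r ^ Fintype.card ι := by
  rw [Real.volume_pi_closedBall x (by positivity), mul_div_cancel₀ r two_ne_zero,
    ENNReal.ofReal_pow hr]

open scoped Classical in
theorem card_disjoint_add_card_inter_nonempty {α ι : Type*} [Fintype ι] (I : ι → Set α)
    (A : Set α) :
    #{k | Disjoint (I k) A} + Nat.card {k // (I k ∩ A).Nonempty} = Fintype.card ι := by
  simp only [Nat.card_eq_fintype_card, Fintype.card_subtype, ← not_disjoint_iff_nonempty_inter]
  exact Finset.card_filter_add_card_filter_not _

open scoped Classical in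
theorem volume_ANset'_add_card_disjoint_innerCube_le (d : ℕ) (hd : 0 < d) (M : ℝ) (hM : 0 < M)
    (N : ℕ) {V : ℝ} (hV : 0 ≤ V) (hvol : ENNReal.ofReal V ≤ volume (ANset' d hd M hM N)) :
    V + #{k | Disjoint (innerCube d N k) (ANset' d hd M hM N)} * innerSide d N ^ d ≤
      (15/16)^d * Real.exp (-(N:ℝ)) := by
  set b := #{k | Disjoint (innerCube d N k) (ANset' d hd M hM N)}
  set s := cellSide d N
  set σ := innerSide d N
  have hs := cellSide_pos d N
  have hσ := innerSide_pos d N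
  have hcount := measure_add_card_disjoint_mul_le volume (A := ANset' d hd M hM N)
    (C := fun k => closedBall (cellCenter d N k) (s / 2)) (I := innerCube d N)
    (fun k => innerCube_eq_closedBall d N k ▸ isClosed_closedBall.measurableSet)
    (fun k => innerCube_eq_closedBall d N k ▸
      closedBall_subset_closedBall (by linarith [innerSide_le_cellSide d N hd]))
    (fun _ ht => box_subset_iUnion_cells d N ht.2)
    (fun k => (innerCube_eq_closedBall d N k ▸ Real.volume_pi_closedBall_half _ hσ.le).ge)
    (fun k => (Real.volume_pi_closedBall_half _ hs.le).le)
  have hcells : (⌊Real.exp (N:ℝ)⌋₊ : ℝ) ^ d * s ^ d = (15/16)^d * Real.exp (-(N:ℝ)) := by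
    rw [← mul_pow, floor_exp_mul_cellSide, mul_pow, ← Real.exp_nat_mul]
    field_simp
  rw [← hcells, ← ENNReal.ofReal_le_ofReal_iff (by positivity)]
  calc ENNReal.ofReal (V + b * σ ^ d) = ENNReal.ofReal V + b * ENNReal.ofReal σ ^ d := by
        rw [ENNReal.ofReal_add hV (by positivity), ENNReal.ofReal_mul b.cast_nonneg,
          ENNReal.ofReal_pow hσ.le, ENNReal.ofReal_natCast]
    _ ≤ volume (ANset' d hd M hM N) + b * ENNReal.ofReal σ ^ d := by gcongr
    _ ≤ (⌊Real.exp (N:ℝ)⌋₊ ^ d : ℕ) * ENNReal.ofReal s ^ d := by simpa using hcount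
    _ = ENNReal.ofReal ((⌊Real.exp (N:ℝ)⌋₊ : ℝ) ^ d * s ^ d) := by
        rw [ENNReal.ofReal_mul (by positivity), ENNReal.ofReal_pow hs.le, ← Nat.cast_pow,
          ENNReal.ofReal_natCast]

theorem four_div_thirteen_pow_mul_exp_mul_innerSide_pow (d N : ℕ) (hd : 0 < d) :
    ((4:ℝ)/13)^d * Real.exp ((d:ℝ)*N) * innerSide d N ^ d = (1/4)^d * Real.exp (-(N:ℝ)) := by
  have hexp : Real.exp ((d:ℝ)*N) * Real.exp (d * (-(N:ℝ)*((d:ℝ)+1)/(d:ℝ))) =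
      Real.exp (-(N:ℝ)) := by
    rw [← Real.exp_add]; congr 1; field_simp; ring
  have hconst : ((4:ℝ)/13)^d * (13/16)^d = (1/4)^d := by rw [← mul_pow]; norm_num
  rw [innerSide, mul_pow, ← Real.exp_nat_mul]
  linear_combination ((4:ℝ)/13)^d * (13/16)^d * hexp + Real.exp (-(N:ℝ)) * hconst

open scoped Classical in
theorem card_disjoint_innerCube_ANset'_le (d : ℕ) (hd : 0 < d) (M : ℝ) (hM : 0 < M) (N : ℕ)
    (hvol : ENNReal.ofReal ((((15:ℝ)/16)^d - ((1:ℝ)/4)^d) * Real.exp (-(N:ℝ))) ≤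
      volume (ANset' d hd M hM N)) :
    (#{k | Disjoint (innerCube d N k) (ANset' d hd M hM N)} : ℝ) ≤
      ((4:ℝ)/13)^d * Real.exp ((d:ℝ)*N) := by
  have hV : 0 ≤ (((15:ℝ)/16)^d - ((1:ℝ)/4)^d) * Real.exp (-(N:ℝ)) :=
    mul_nonneg (sub_nonneg.2 (pow_le_pow_left₀ (by norm_num) (by norm_num) d)) (Real.exp_pos _).le
  have hbound := volume_ANset'_add_card_disjoint_innerCube_le d hd M hM N hV hvol
  refine le_of_mul_le_mul_right ?_ (pow_pos (innerSide_pos d N) d)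
  rw [four_div_thirteen_pow_mul_exp_mul_innerSide_pow d N hd]
  linarith

theorem pow_div_thirteen_le_floor_pow_sub_ceil {E : ℝ} {d : ℕ} (hd : 0 < d)
    (hE : 2 * d + 9 ≤ E) :
    E ^ d / 13 ≤ (⌊E⌋₊ : ℝ) ^ d - ⌈((4:ℝ)/13)^d * E ^ d⌉₊ := by
  have hE0 : 0 < E := by linarith [(d.cast_nonneg : (0:ℝ) ≤ d)]
  have hfloor : E ^ d * (1 - d / E) ≤ (⌊E⌋₊ : ℝ) ^ d := by
    calc E ^ d * (1 - d / E) = E ^ d * (1 + d * (-1 / E)) := by ring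
      _ ≤ E ^ d * (1 + -1 / E) ^ d := by
          gcongr
          exact one_add_mul_le_pow (by rw [neg_div, neg_le_neg_iff, div_le_iff₀ hE0]; linarith) d
      _ = (E - 1) ^ d := by rw [← mul_pow]; congr 1; field_simp; ring
      _ ≤ (⌊E⌋₊ : ℝ) ^ d := by
          gcongr
          · linarith
          · exact (Nat.sub_one_lt_floor E).le
  have hdE : E ^ d * (d / E) ≤ E ^ d / 2 := by
    calc E ^ d * (d / E) ≤ E ^ d * (1 / 2) :=
          mul_le_mul_of_nonneg_left (by rw [div_le_div_iff₀ hE0 two_pos]; linarith) (by positivity)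
      _ = E ^ d / 2 := by ring
  have hEd : 9 ≤ E ^ d := le_trans (by linarith) (le_self_pow₀ (by linarith) hd.ne')
  have hceil : (⌈((4:ℝ)/13)^d * E ^ d⌉₊ : ℝ) ≤ 4 / 13 * E ^ d + 1 := by
    refine (Nat.ceil_lt_add_one (by positivity)).le.trans ?_
    gcongr
    exact pow_le_of_le_one (by norm_num) (by norm_num) hd.ne'
  nlinarith

theorem count_innerCubes_meeting_AN'_general (d : ℕ) (hd0 : 0 < d)
    (M : ℝ) (hM0 : 0 < M)
    (hvol : ∀ N : ℕ, ENNReal.ofReal ((((15:ℝ)/16)^d - ((1:ℝ)/4)^d) * Real.exp (-(N:ℝ))) ≤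
      volume (ANset' d hd0 M hM0 N)) :
    ∃ N₀ : ℕ, ∀ N : ℕ, N₀ ≤ N →
      ((⌊Real.exp (N:ℝ)⌋₊ : ℝ)^d - (⌈((4:ℝ)/13)^d * Real.exp ((d:ℝ)*N)⌉₊ : ℝ)) ≤
        (Nat.card {k : Fin d → Fin ⌊Real.exp (N:ℝ)⌋₊ //
          (innerCube d N k ∩ ANset' d hd0 M hM0 N).Nonempty} : ℝ) ∧
      Real.exp ((d:ℝ)*N) / 13 ≤
        ((⌊Real.exp (N:ℝ)⌋₊ : ℝ)^d - (⌈((4:ℝ)/13)^d * Real.exp ((d:ℝ)*N)⌉₊ : ℝ)) := by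
  obtain ⟨N₀, hN₀⟩ := eventually_atTop.1 <|
    (Real.tendsto_exp_atTop.comp tendsto_natCast_atTop_atTop).eventually_ge_atTop
      (2 * d + 9 : ℝ)
  refine ⟨N₀, fun N hN => ⟨?_, ?_⟩⟩
  · have hbad := (card_disjoint_innerCube_ANset'_le d hd0 M hM0 N (hvol N)).trans
      (Nat.le_ceil _)
    have hsplit := card_disjoint_add_card_inter_nonempty (innerCube d N) (ANset' d hd0 M hM0 N)
    rw [Fintype.card_fun, Fintype.card_fin, Fintype.card_fin] at hsplit
    have hsplit' := congrArg (Nat.cast : ℕ → ℝ) hsplit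
    push_cast at hsplit'
    linarith
  · rw [Real.exp_nat_mul]
    exact pow_div_thirteen_le_floor_pow_sub_ceil hd0 (hN₀ N hN)

/-- For all large `N`, at least `⌊e^N⌋^d - ⌈(4/13)^d e^{dN}⌉ ≥ (1/13)e^{dN}` of
the concentric subcubes meet `A_N'`. -/
theorem count_innerCubes_meeting_AN' (d : ℕ) (hd0 : 0 < d) (hd : 2 ≤ d)
    (M : ℝ) (hM0 : 0 < M) (hM : 1 ≤ M)
    (hvol : ∀ N : ℕ, ENNReal.ofReal ((((15:ℝ)/16)^d - ((1:ℝ)/4)^d) * Real.exp (-(N:ℝ))) ≤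
      volume (ANset' d hd0 M hM0 N)) :
    ∃ N₀ : ℕ, ∀ N : ℕ, N₀ ≤ N →
      ((⌊Real.exp (N:ℝ)⌋₊ : ℝ)^d - (⌈((4:ℝ)/13)^d * Real.exp ((d:ℝ)*N)⌉₊ : ℝ)) ≤
        (Nat.card {k : Fin d → Fin ⌊Real.exp (N:ℝ)⌋₊ //
          (innerCube d N k ∩ ANset' d hd0 M hM0 N).Nonempty} : ℝ) ∧
      Real.exp ((d:ℝ)*N) / 13 ≤
        ((⌊Real.exp (N:ℝ)⌋₊ : ℝ)^d - (⌈((4:ℝ)/13)^d * Real.exp ((d:ℝ)*N)⌉₊ : ℝ)) :=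
  count_innerCubes_meeting_AN'_general d hd0 M hM0 hvol
end
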